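/- Let n be a positive natural number and let Δ : Mₙ(ℂ) → Mₙ(ℂ) be a weak-2-local *-derivation. Then Δ is bounded on the set of projections of Mₙ(ℂ): there exists a constant C ≥ 0 such that ‖Δ(p)‖ ≤ C for every projection p in Mₙ(ℂ) (p = p* = p²), where ‖·‖ denotes the operator norm. -/

import Mathlib

open scoped Matrix.Norms.L2Operator

/-- A (not necessarily linear) map `Δ` on `Mₙ(ℂ)` is a weak-2-local *-derivation if for all
`a b` and every continuous linear functional `φ` there is a *-derivation `D` (bundled as a
`ℂ`-linear map satisfying the Leibniz rule and commuting with the involution) such that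
`φ (Δ a) = φ (D a)` and `φ (Δ b) = φ (D b)`. -/
def IsWeak2LocalStarDerivation {n : ℕ} (Δ : Matrix (Fin n) (Fin n) ℂ → Matrix (Fin n) (Fin n) ℂ) :
    Prop :=
  ∀ (a b : Matrix (Fin n) (Fin n) ℂ) (φ : Matrix (Fin n) (Fin n) ℂ →L[ℂ] ℂ),
    ∃ D : Matrix (Fin n) (Fin n) ℂ →ₗ[ℂ] Matrix (Fin n) (Fin n) ℂ,
      (∀ x y, D (x * y) = D x * y + x * D y) ∧
      (∀ x, D (star x) = star (D x)) ∧
      φ (Δ a) = φ (D a) ∧ φ (Δ b) = φ (D b)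

/-!
Testing the weak-2-local property against the trace functionals `x ↦ tr (y * x)` transfers to `Δ`
two identities valid for every derivation `D` of `Mₙ(ℂ)`: `D p = D p * p + p * D p` for idempotents
`p`, and `tr (c * c * D c) = 0`, which holds because derivations of `Mₙ(ℂ)` are trace-free.
Taking `c = p - β • b` and comparing coefficients of `β` gives `tr (b * Δ p) = - tr (p * Δ b)` for
idempotent `p`. So on idempotents `Δ` agrees with a linear map, which is bounded on the
finite-dimensional `Mₙ(ℂ)`, while projections have norm at most one.
-/

open Matrix

section Leibniz

variable {m R : Type*} [Fintype m] [CommRing R]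

lemma trace_map_eq_zero_of_isIdempotentElem (D : Matrix m m R →ₗ[R] Matrix m m R)
    (hD : ∀ x y, D (x * y) = D x * y + x * D y) {e : Matrix m m R} (he : IsIdempotentElem e) :
    (D e).trace = 0 := by
  have hsplit : D e = D e * e + e * D e := by rw [← hD, he.eq]
  have hcorner : (e * D e).trace = 0 := by
    have h := congrArg (fun x => (e * x).trace) hsplit
    simp only [mul_add, trace_add, ← mul_assoc, he.eq] at h
    rw [trace_mul_cycle, he.eq] at h
    linear_combination -h
  rw [hsplit, trace_add, trace_mul_comm, hcorner, add_zero]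

lemma trace_map_commutator_eq_zero (D : Matrix m m R →ₗ[R] Matrix m m R)
    (hD : ∀ x y, D (x * y) = D x * y + x * D y) (x y : Matrix m m R) :
    (D (x * y - y * x)).trace = 0 := by
  rw [map_sub, hD, hD, trace_sub, trace_add, trace_add, trace_mul_comm (D x), trace_mul_comm x]
  ring

theorem trace_map_eq_zero_of_leibniz [DecidableEq m] (D : Matrix m m R →ₗ[R] Matrix m m R)
    (hD : ∀ x y, D (x * y) = D x * y + x * D y) (z : Matrix m m R) :
    (D z).trace = 0 := by
  suffices traceLinearMap m R R ∘ₗ D = 0 from congrArg (· z) this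
  apply ext_linearMap
  intro i j
  ext
  simp only [LinearMap.comp_apply, singleLinearMap_apply, traceLinearMap_apply,
    LinearMap.zero_apply]
  rcases eq_or_ne i j with rfl | hij
  · exact trace_map_eq_zero_of_isIdempotentElem D hD (by simp [IsIdempotentElem])
  · have : single i j (1 : R) = single i i 1 * single i j 1 - single i j 1 * single i i 1 := by
      rw [single_mul_single_same, single_mul_single_of_ne _ _ _ _ hij.symm, one_mul, sub_zero]
    rw [this, trace_map_commutator_eq_zero D hD]

lemma trace_mul_self_mul_map_self_eq_zero [DecidableEq m] [IsAddTorsionFree R]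
    (D : Matrix m m R →ₗ[R] Matrix m m R)
    (hD : ∀ x y, D (x * y) = D x * y + x * D y) (c : Matrix m m R) :
    (c * c * D c).trace = 0 := by
  have h := trace_map_eq_zero_of_leibniz D hD (c * (c * c))
  have h₁ : (D c * (c * c)).trace = (c * c * D c).trace := trace_mul_comm _ _
  have h₂ : (c * (D c * c)).trace = (c * c * D c).trace := by
    rw [← mul_assoc, trace_mul_comm, ← mul_assoc]
  have h₃ : (c * (c * D c)).trace = (c * c * D c).trace := by rw [mul_assoc]
  rw [hD, hD, mul_add, trace_add, trace_add, h₁, h₂, h₃] at h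
  rw [← nsmul_eq_zero_iff_right three_ne_zero, ← h]
  abel

lemma trace_sub_smul_mul_sub_smul_mul (a b x : Matrix m m R) (β : R) :
    ((a - β • b) * (a - β • b) * x).trace =
      (a * a * x).trace - β * ((a * b * x).trace + (b * a * x).trace) +
        β ^ 2 * (b * b * x).trace := by
  simp only [sub_mul, mul_sub, smul_mul_assoc, mul_smul_comm, trace_sub, trace_smul,
    smul_eq_mul]
  ring

end Leibniz

namespace IsWeak2LocalStarDerivation

variable {n : ℕ} {Δ : Matrix (Fin n) (Fin n) ℂ → Matrix (Fin n) (Fin n) ℂ}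

lemma exists_trace_mul_eq (hΔ : IsWeak2LocalStarDerivation Δ) (a b y : Matrix (Fin n) (Fin n) ℂ) :
    ∃ D : Matrix (Fin n) (Fin n) ℂ →ₗ[ℂ] Matrix (Fin n) (Fin n) ℂ,
      (∀ x y, D (x * y) = D x * y + x * D y) ∧
      (y * Δ a).trace = (y * D a).trace ∧ (y * Δ b).trace = (y * D b).trace := by
  obtain ⟨D, hD, -, ha, hb⟩ :=
    hΔ a b (traceLinearMap (Fin n) ℂ ℂ ∘ₗ LinearMap.mulLeft ℂ y).toContinuousLinearMap
  exact ⟨D, hD, ha, hb⟩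

lemma map_eq_map_mul_add_mul_map (hΔ : IsWeak2LocalStarDerivation Δ)
    {p : Matrix (Fin n) (Fin n) ℂ} (hp : IsIdempotentElem p) :
    Δ p = Δ p * p + p * Δ p := by
  rw [← sub_eq_zero, ext_iff_trace_mul_left]
  intro y
  -- `x ↦ x - x p - p x` is symmetric for the trace pairing and kills `D p` for every derivation
  have hsymm : ∀ x, (y * (x - (x * p + p * x))).trace = ((y - p * y - y * p) * x).trace := by
    intro x
    simp only [mul_sub, sub_mul, mul_add, trace_sub, trace_add, ← mul_assoc]
    rw [trace_mul_cycle]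
    ring
  obtain ⟨D, hD, hDp, -⟩ := hΔ.exists_trace_mul_eq p p (y - p * y - y * p)
  rw [hsymm, hDp, ← hsymm, ← hD, hp.eq, sub_self, mul_zero, trace_zero]

lemma trace_sq_mul_map_eq (hΔ : IsWeak2LocalStarDerivation Δ) (a b : Matrix (Fin n) (Fin n) ℂ)
    (β : ℂ) :
    ((a - β • b) * (a - β • b) * Δ a).trace = β * ((a - β • b) * (a - β • b) * Δ b).trace := by
  set c := a - β • b
  obtain ⟨D, hD, ha, hb⟩ := hΔ.exists_trace_mul_eq a b (c * c)
  have hc := trace_mul_self_mul_map_self_eq_zero D hD c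
  rw [map_sub, map_smul, mul_sub, trace_sub, mul_smul_comm, trace_smul, smul_eq_mul] at hc
  rw [ha, hb]
  linear_combination hc

lemma trace_sq_mul_map_polarization (hΔ : IsWeak2LocalStarDerivation Δ)
    (a b : Matrix (Fin n) (Fin n) ℂ) :
    (a * b * Δ a).trace + (b * a * Δ a).trace + (a * a * Δ b).trace = 0 := by
  have h := fun β => hΔ.trace_sq_mul_map_eq a b β
  simp only [trace_sub_smul_mul_sub_smul_mul] at h
  -- extract the coefficient of `β` from an identity between cubic polynomials in `β`
  linear_combination (2 / 3 : ℂ) * h (-1) - (2 / 3 : ℂ) * h 1 - (1 / 12 : ℂ) * h (-2)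
    + (1 / 12 : ℂ) * h 2

lemma trace_mul_map_of_isIdempotentElem (hΔ : IsWeak2LocalStarDerivation Δ)
    {p : Matrix (Fin n) (Fin n) ℂ} (hp : IsIdempotentElem p) (b : Matrix (Fin n) (Fin n) ℂ) :
    (b * Δ p).trace = -(p * Δ b).trace := by
  have h := hΔ.trace_sq_mul_map_polarization p b
  rw [hp.eq] at h
  have hcycle : (b * (Δ p * p)).trace = (p * b * Δ p).trace := by
    rw [← mul_assoc, trace_mul_comm, ← mul_assoc]
  rw [hΔ.map_eq_map_mul_add_mul_map hp, mul_add, trace_add, hcycle, ← mul_assoc]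
  linear_combination h

end IsWeak2LocalStarDerivation

/-- The linear map sending `q` to the matrix `M` with `tr (b * M) = - tr (q * Δ b)` for all `b`. -/
noncomputable def traceDual {n : ℕ} (Δ : Matrix (Fin n) (Fin n) ℂ → Matrix (Fin n) (Fin n) ℂ) :
    Matrix (Fin n) (Fin n) ℂ →ₗ[ℂ] Matrix (Fin n) (Fin n) ℂ where
  toFun q := of fun k j => -(q * Δ (single j k 1)).trace
  map_add' q r := by ext; simp [add_mul, add_comm]
  map_smul' c q := by ext; simp

lemma IsWeak2LocalStarDerivation.map_eq_traceDual_of_isIdempotentElem {n : ℕ}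
    {Δ : Matrix (Fin n) (Fin n) ℂ → Matrix (Fin n) (Fin n) ℂ} (hΔ : IsWeak2LocalStarDerivation Δ)
    {p : Matrix (Fin n) (Fin n) ℂ} (hp : IsIdempotentElem p) :
    Δ p = traceDual Δ p := by
  ext k j
  rw [traceDual, LinearMap.coe_mk, AddHom.coe_mk, of_apply,
    ← hΔ.trace_mul_map_of_isIdempotentElem hp, trace_single_mul, one_smul]

theorem weak2LocalStarDerivation_bounded_on_projections_general {n : ℕ}
    (Δ : Matrix (Fin n) (Fin n) ℂ → Matrix (Fin n) (Fin n) ℂ)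
    (hΔ : IsWeak2LocalStarDerivation Δ) :
    ∃ C : ℝ, 0 ≤ C ∧ ∀ p : Matrix (Fin n) (Fin n) ℂ,
      star p = p → p * p = p → ‖Δ p‖ ≤ C := by
  let T := (traceDual Δ).toContinuousLinearMap
  refine ⟨‖T‖, norm_nonneg T, fun p hps hpp => ?_⟩
  have hp : IsStarProjection p := ⟨hpp, hps⟩
  calc ‖Δ p‖ = ‖T p‖ := by rw [hΔ.map_eq_traceDual_of_isIdempotentElem hp.isIdempotentElem]; rfl
    _ ≤ ‖T‖ * ‖p‖ := T.le_opNorm p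
    _ ≤ ‖T‖ := mul_le_of_le_one_right (norm_nonneg T) (hp.norm_le p)

/-- Every weak-2-local *-derivation on `Mₙ(ℂ)` is bounded on the set of projections, with
respect to the operator norm. -/
theorem weak2LocalStarDerivation_bounded_on_projections {n : ℕ} (hn : 0 < n)
    (Δ : Matrix (Fin n) (Fin n) ℂ → Matrix (Fin n) (Fin n) ℂ)
    (hΔ : IsWeak2LocalStarDerivation Δ) :
    ∃ C : ℝ, 0 ≤ C ∧ ∀ p : Matrix (Fin n) (Fin n) ℂ,
      star p = p → p * p = p → ‖Δ p‖ ≤ C :=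
  weak2LocalStarDerivation_bounded_on_projections_general Δ hΔ
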